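/- arXiv:1106.3474 — 6 statements merged into one kernel-verified Lean document; each statement's English description precedes it below -/
import Mathlib

section
/- For any positive integer q and any integer a, the number η_a(q) of pairs (α,β) with 1 ≤ α,β ≤ q and α² + β² ≡ a (mod q) satisfies η_a(q) ≪ q·τ(q). -/
/-!
Write `ρ c` for the number of square roots of `c` modulo `q`. Then
`η_a(q) = ∑_c ρ(c) ρ(a - c) ≤ ∑_c ρ(c)²` by Cauchy–Schwarz, and the right side counts the
solutions of `x² = y²`. The substitution `(u, v) = (x - y, x + y)` is at most 2-to-1 on `ZMod q`
and sends these to solutions of `u v = 0`; for each of those there is a factorisation `q = d e`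
with `d ∣ u` and `e ∣ v`, and each divisor `d` accounts for at most `(q / d) · d = q` pairs.
-/

open Finset

section Convolution

variable {α G : Type*} [Fintype α] [Fintype G] [DecidableEq G]

lemma card_filter_eq_comp_eq_sum_mul (f : α → G) (u : G → G) :
    #{p : α × α | f p.2 = u (f p.1)} = ∑ c, #{x | f x = c} * #{x | f x = u c} := by
  calc #{p : α × α | f p.2 = u (f p.1)}
      = ∑ x, #{y | f y = u (f x)} := by
        simp only [card_filter, Fintype.sum_prod_type]
    _ = ∑ c, ∑ x with f x = c, #{y | f y = u (f x)} := (sum_fiberwise _ _ _).symm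
    _ = ∑ c, #{x | f x = c} * #{x | f x = u c} := by
        refine sum_congr rfl fun c _ => ?_
        rw [sum_congr rfl fun x hx => by rw [(mem_filter.1 hx).2], sum_const, smul_eq_mul]

theorem card_filter_add_eq_le_card_filter_eq [AddCommGroup G] (f : α → G) (b : G) :
    #{p : α × α | f p.1 + f p.2 = b} ≤ #{p : α × α | f p.1 = f p.2} := by
  set ρ : G → ℕ := fun c => #{x | f x = c}
  have hsum : #{p : α × α | f p.1 + f p.2 = b} = ∑ c, ρ c * ρ (b - c) := by
    rw [← card_filter_eq_comp_eq_sum_mul]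
    simp_rw [eq_sub_iff_add_eq']
  have hdiag : #{p : α × α | f p.1 = f p.2} = ∑ c, ρ c ^ 2 := by
    rw [filter_congr fun p _ => eq_comm]
    exact (card_filter_eq_comp_eq_sum_mul f id).trans (by simp only [sq, id, ρ])
  have hreflect : ∑ c, ρ (b - c) ^ 2 = ∑ c, ρ c ^ 2 :=
    Fintype.sum_equiv (Equiv.subLeft b) _ _ fun _ => rfl
  rw [hsum, hdiag, ← pow_le_pow_iff_left₀ (Nat.zero_le _) (Nat.zero_le _) two_ne_zero]
  calc (∑ c, ρ c * ρ (b - c)) ^ 2 ≤ (∑ c, ρ c ^ 2) * ∑ c, ρ (b - c) ^ 2 :=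
        sum_mul_sq_le_sq_mul_sq _ _ _
    _ = (∑ c, ρ c ^ 2) ^ 2 := by rw [hreflect, sq]

end Convolution

theorem card_filter_nsmul_eq_le {A : Type*} [AddCommGroup A] [Fintype A] [DecidableEq A]
    (n : ℕ) (c : A) : #{x : A | n • x = c} ≤ #{x : A | n • x = 0} := by
  by_cases hc : c ∈ Set.range (nsmulAddMonoidHom (α := A) n)
  · exact (AddMonoidHom.card_fiber_eq_of_mem_range _ hc ⟨0, nsmul_zero n⟩).le
  · rw [filter_eq_empty_iff.2 fun x _ (hx : n • x = c) => hc ⟨x, hx⟩, card_empty]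
    exact Nat.zero_le _

theorem card_filter_sq_eq_sq_le {R : Type*} [CommRing R] [Fintype R] [DecidableEq R] :
    #{p : R × R | p.1 ^ 2 = p.2 ^ 2} ≤ #{x : R | 2 • x = 0} * #{p : R × R | p.1 * p.2 = 0} := by
  refine card_le_mul_card_image_of_maps_to (f := fun p => (p.1 - p.2, p.1 + p.2)) ?_ _ ?_
  · intro p hp
    simp only [mem_filter, mem_univ, true_and] at hp ⊢
    linear_combination hp
  · intro w _
    calc #{p ∈ {p : R × R | p.1 ^ 2 = p.2 ^ 2} | (p.1 - p.2, p.1 + p.2) = w}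
        ≤ #{x : R | 2 • x = w.1 + w.2} := by
          refine card_le_card_of_injOn Prod.fst (fun p hp => ?_) fun p hp p' hp' h => ?_
          · simp only [mem_coe, mem_filter, mem_univ, true_and] at hp ⊢
            rw [← hp.2]
            simp only [two_nsmul]
            ring
          · simp only [mem_coe, mem_filter, mem_univ, true_and] at hp hp'
            have h2 := congrArg Prod.fst (hp.2.trans hp'.2.symm)
            simp only at h2
            exact Prod.ext h (by linear_combination h - h2)
      _ ≤ #{x : R | 2 • x = 0} := card_filter_nsmul_eq_le 2 _

theorem ZMod.card_filter_two_nsmul_eq_zero_le (q : ℕ) [NeZero q] :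
    #{x : ZMod q | 2 • x = 0} ≤ 2 := by
  convert IsAddCyclic.card_nsmul_eq_zero_le (α := ZMod q) two_pos

theorem Nat.card_filter_dvd_mul_Ioc_le (q : ℕ) :
    #{p ∈ Ioc 0 q ×ˢ Ioc 0 q | q ∣ p.1 * p.2} ≤ #q.divisors * q := by
  have hcover : {p ∈ Ioc 0 q ×ˢ Ioc 0 q | q ∣ p.1 * p.2} ⊆ q.divisors.biUnion fun d =>
      {m ∈ Ioc 0 q | d ∣ m} ×ˢ {n ∈ Ioc 0 q | q / d ∣ n} := by
    intro p hp
    obtain ⟨⟨hm, hn⟩, hq⟩ := by simpa only [mem_filter, mem_product] using hp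
    obtain ⟨d, e, hd, he, rfl⟩ := Nat.dvd_mul.1 hq
    have hq0 : d * e ≠ 0 := by grind
    rw [mem_biUnion]
    refine ⟨d, Nat.mem_divisors.2 ⟨dvd_mul_right d e, hq0⟩, ?_⟩
    rw [Nat.mul_div_cancel_left _ (Nat.pos_of_ne_zero (left_ne_zero_of_mul hq0))]
    exact mem_product.2 ⟨mem_filter.2 ⟨hm, hd⟩, mem_filter.2 ⟨hn, he⟩⟩
  refine (card_le_card hcover).trans (card_biUnion_le_card_mul _ _ _ fun d hd => ?_)
  obtain ⟨hdq, hq0⟩ := Nat.mem_divisors.1 hd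
  rw [card_product, Nat.Ioc_filter_dvd_card_eq_div, Nat.Ioc_filter_dvd_card_eq_div,
    Nat.div_div_self hdq hq0, Nat.div_mul_cancel hdq]

theorem ZMod.natCast_bijOn_Ioc (q : ℕ) [NeZero q] :
    Set.BijOn (Nat.cast : ℕ → ZMod q) (Ioc 0 q) Set.univ := by
  refine ⟨Set.mapsTo_univ _ _, fun m hm n hn h => ?_, fun z _ => ?_⟩
  · simp only [coe_Ioc, Set.mem_Ioc] at hm hn
    have hmod : m - 1 ≡ n - 1 [MOD q] := Nat.ModEq.add_right_cancel' 1 <| by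
      rw [Nat.sub_add_cancel hm.1, Nat.sub_add_cancel hn.1]
      exact (ZMod.natCast_eq_natCast_iff _ _ _).1 h
    have := hmod.eq_of_lt_of_lt (by omega) (by omega)
    omega
  · refine ⟨(z - 1).val + 1, ?_, by simp⟩
    have := (z - 1).val_lt
    simp only [coe_Ioc, Set.mem_Ioc]
    omega

section ZModTransfer

variable (q : ℕ) [NeZero q]

theorem ZMod.natCast_prodMap_bijOn_Ioc :
    Set.BijOn (fun p : ℕ × ℕ => ((p.1 : ZMod q), (p.2 : ZMod q)))
      ↑(Ioc 0 q ×ˢ Ioc 0 q) Set.univ := by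
  simpa only [coe_product, Set.univ_prod_univ] using
    (natCast_bijOn_Ioc q).prodMap (natCast_bijOn_Ioc q)

theorem ZMod.card_filter_sq_add_sq_Ioc_le (a : ℤ) :
    #{p ∈ Ioc 0 q ×ˢ Ioc 0 q | ((p.1 : ℤ) ^ 2 + (p.2 : ℤ) ^ 2) % q = a % q} ≤
      #{p : ZMod q × ZMod q | p.1 ^ 2 + p.2 ^ 2 = a} := by
  refine card_le_card_of_injOn (fun p => ((p.1 : ZMod q), (p.2 : ZMod q))) (fun p hp => ?_)
    ((natCast_prodMap_bijOn_Ioc q).injOn.mono (filter_subset _ _))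
  simp only [mem_coe, mem_filter, mem_univ, true_and] at hp ⊢
  exact_mod_cast (ZMod.intCast_eq_intCast_iff' _ _ _).2 hp.2

theorem ZMod.card_filter_mul_eq_zero_le :
    #{p : ZMod q × ZMod q | p.1 * p.2 = 0} ≤ #q.divisors * q := by
  refine le_trans ?_ (Nat.card_filter_dvd_mul_Ioc_le q)
  refine card_le_card_of_surjOn (fun p => ((p.1 : ZMod q), (p.2 : ZMod q))) fun z hz => ?_
  obtain ⟨p, hp, rfl⟩ := (natCast_prodMap_bijOn_Ioc q).surjOn (Set.mem_univ z)
  simp only [mem_coe, mem_filter, mem_univ, true_and] at hz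
  refine ⟨p, mem_filter.2 ⟨hp, ?_⟩, rfl⟩
  rw [← ZMod.natCast_eq_zero_iff, Nat.cast_mul, hz]

end ZModTransfer

theorem eta_bound :
    ∃ C : ℝ, 0 < C ∧ ∀ (q : ℕ), 0 < q → ∀ (a : ℤ),
      ((((Finset.Icc 1 q) ×ˢ (Finset.Icc 1 q)).filter
          (fun p : ℕ × ℕ => ((p.1 : ℤ)^2 + (p.2 : ℤ)^2) % q = a % q)).card : ℝ) ≤
        C * q * (q.divisors.card) := by
  refine ⟨2, two_pos, fun q hq a => ?_⟩
  have : NeZero q := ⟨hq.ne'⟩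
  have hcount : #{p ∈ Icc 1 q ×ˢ Icc 1 q | ((p.1 : ℤ) ^ 2 + (p.2 : ℤ) ^ 2) % q = a % q} ≤
      2 * (#q.divisors * q) :=
    -- `Icc 1 q` and `Ioc 0 q` are definitionally equal.
    calc _ ≤ #{p : ZMod q × ZMod q | p.1 ^ 2 + p.2 ^ 2 = a} :=
          ZMod.card_filter_sq_add_sq_Ioc_le q a
      _ ≤ #{p : ZMod q × ZMod q | p.1 ^ 2 = p.2 ^ 2} :=
          card_filter_add_eq_le_card_filter_eq (· ^ 2) _
      _ ≤ #{x : ZMod q | 2 • x = 0} * #{p : ZMod q × ZMod q | p.1 * p.2 = 0} :=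
          card_filter_sq_eq_sq_le
      _ ≤ 2 * (#q.divisors * q) :=
          Nat.mul_le_mul (ZMod.card_filter_two_nsmul_eq_zero_le q)
            (ZMod.card_filter_mul_eq_zero_le q)
  refine (Nat.cast_le.2 hcount).trans_eq ?_
  push_cast
  ring
end

section
/- Let ν ≥ 2 and a, m, t be integers with m and t both even. Define B(2^ν; a, m, t) = Σ*_{l mod 2^ν} e(−al/2^ν)·S(2^ν; l, m)·S(2^ν; l, t), where the star denotes summation over l coprime to 2. Then B(2^ν; a, m, t) = 2^{ν+1}·K(2^ν; 2^{ν−2} − a, −(m²+t²)/4), where K is the Kloosterman sum. -/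
noncomputable def e (t : ℝ) : ℂ := Complex.exp (2 * Real.pi * Complex.I * t)

noncomputable def gaussS (q : ℕ) (k m : ℤ) : ℂ :=
  ∑ α ∈ Finset.range q, e (((k * (α : ℤ)^2 + m * (α : ℤ) : ℤ) : ℝ) / q)

/-- Kloosterman sum, written as a sum over pairs of inverse residues. -/
noncomputable def kloos (q : ℕ) (k n : ℤ) : ℂ :=
  ∑ p ∈ ((Finset.range q) ×ˢ (Finset.range q)).filter
      (fun p : ℕ × ℕ => ((p.1 : ℤ) * (p.2 : ℤ)) % q = 1 % (q : ℤ)),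
    e (((k * (p.1 : ℤ) + n * (p.2 : ℤ) : ℤ) : ℝ) / q)

/-!
For odd `l`, completing the square gives `S(2^ν; l, 2b) = e(-l̄ b² / 2^ν) G(l)` with the
quadratic Gauss sum `G(l) = S(2^ν; l, 0)`, so the `l`-th term of `B` is
`e(-a l / 2^ν) e(-l̄ (m'² + t'²) / 2^ν) G(l)²` where `m = 2m'`, `t = 2t'`. The classical
evaluation `G(l)² = 2^(ν+1) e(l/4)`, obtained from `G_{4N}(l) = 2 G_N(l)` for `4 ∣ N` and the
cases `2^ν = 4, 8`, turns it into `2^(ν+1)` times the `l`-th Kloosterman term, and the odd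
residues mod `2^ν` are exactly the units.
-/

open Finset Function ZMod

theorem Function.Periodic.sum_range_mul {M : Type*} [AddCommMonoid M] {f : ℕ → M} {c : ℕ}
    (hf : Periodic f c) (k : ℕ) : ∑ i ∈ range (k * c), f i = k • ∑ i ∈ range c, f i := by
  induction k with
  | zero => simp
  | succ k ih =>
    rw [add_mul, one_mul, sum_range_add, ih, succ_nsmul]
    congr 1
    refine sum_congr rfl fun i _ => ?_
    rw [add_comm]
    simpa using hf.nat_mul k i

theorem Function.Antiperiodic.sum_range_two_mul {M : Type*} [AddCommGroup M] {f : ℕ → M} {c : ℕ}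
    (hf : Antiperiodic f c) : ∑ i ∈ range (2 * c), f i = 0 := by
  rw [two_mul, sum_range_add]
  simp only [add_comm c, hf _, sum_neg_distrib, add_neg_cancel]

theorem Finset.sum_range_two_mul {M : Type*} [AddCommMonoid M] (f : ℕ → M) (n : ℕ) :
    ∑ i ∈ range (2 * n), f i = ∑ i ∈ range n, f (2 * i) + ∑ i ∈ range n, f (2 * i + 1) := by
  induction n with
  | zero => simp
  | succ n ih =>
    rw [mul_add_one, sum_range_succ, sum_range_succ, ih, sum_range_succ, sum_range_succ]
    abel

namespace ZMod

variable {M : Type*} [AddCommMonoid M] (q : ℕ) [NeZero q]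

theorem sum_range_natCast (f : ZMod q → M) : ∑ i ∈ range q, f i = ∑ x : ZMod q, f x :=
  sum_nbij' (↑) val (fun _ _ => mem_univ _) (fun x _ => mem_range.2 x.val_lt)
    (fun _ hi => val_cast_of_lt (mem_range.1 hi)) (fun x _ => natCast_zmod_val x) fun _ _ => rfl

theorem sum_range_filter_isUnit (f : ZMod q → M) :
    ∑ l ∈ (range q).filter (fun l : ℕ => IsUnit (l : ZMod q)), f l = ∑ u : (ZMod q)ˣ, f u :=
  sum_bij' (fun l hl => (mem_filter.1 hl).2.unit) (fun u _ => (u : ZMod q).val)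
    (fun _ _ => mem_univ _) (fun u _ => mem_filter.2 ⟨mem_range.2 (val_lt _), by simp⟩)
    (fun l hl => val_cast_of_lt (mem_range.1 (mem_filter.1 hl).1))
    (fun u _ => Units.ext (natCast_zmod_val _)) fun _ _ => rfl

end ZMod

theorem e_intCast_div (q : ℕ) [NeZero q] (n : ℤ) : e (n / q) = stdAddChar (n : ZMod q) := by
  rw [stdAddChar_coe, e]
  push_cast
  ring_nf

theorem stdAddChar_intCast_eq_of_mul_eq {q q' : ℕ} [NeZero q] [NeZero q'] {n n' : ℤ}
    (h : n * q' = n' * q) : stdAddChar (n : ZMod q) = stdAddChar (n' : ZMod q') := by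
  rw [stdAddChar_coe, stdAddChar_coe]
  congr 1
  have hq : (q : ℂ) ≠ 0 := NeZero.ne _
  have hq' : (q' : ℂ) ≠ 0 := NeZero.ne _
  field_simp
  exact_mod_cast h.trans (mul_comm _ _)

theorem stdAddChar_two_of_odd {l : ℤ} (hl : Odd l) : stdAddChar (l : ZMod 2) = -1 := by
  rw [(intCast_eq_one_iff_odd).2 hl, ← Int.cast_one, stdAddChar_coe]
  convert Complex.exp_pi_mul_I using 2
  push_cast
  ring

theorem sq_stdAddChar_four {l : ℤ} (hl : Odd l) : stdAddChar (l : ZMod 4) ^ 2 = -1 := by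
  rw [sq, ← AddChar.map_add_eq_mul, ← Int.cast_add,
    stdAddChar_intCast_eq_of_mul_eq (q' := 2) (n' := l) (by push_cast; ring),
    stdAddChar_two_of_odd hl]

theorem AddChar.sum_mul_sq_add_two_mul {R M : Type*} [CommRing R] [Fintype R] [CommSemiring M]
    (ψ : AddChar R M) {u v : R} (huv : u * v = 1) (b : R) :
    ∑ x, ψ (u * x ^ 2 + 2 * b * x) = ψ (-v * b ^ 2) * ∑ x, ψ (u * x ^ 2) := by
  rw [mul_sum, ← (Equiv.subRight (v * b)).sum_comp]
  refine sum_congr rfl fun x _ => ?_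
  rw [← AddChar.map_add_eq_mul, Equiv.subRight_apply]
  congr 1
  linear_combination (v * b ^ 2 - 2 * b * x) * huv

-- `l` is an integer, not a residue, so that the modulus `q` can be rewritten in `quadGaussSum q l`.
noncomputable def quadGaussSum (q : ℕ) [NeZero q] (l : ℤ) : ℂ :=
  ∑ x : ZMod q, stdAddChar ((l : ZMod q) * x ^ 2)

theorem quadGaussSum_four (l : ℤ) : quadGaussSum 4 l = 2 + 2 * stdAddChar (l : ZMod 4) := by
  rw [quadGaussSum, ← sum_range_natCast]
  simp only [sum_range_succ, range_zero, sum_empty, Nat.cast_ofNat, Nat.cast_zero, Nat.cast_one,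
    zero_pow two_ne_zero, one_pow, mul_zero, mul_one, AddChar.map_zero_eq_one,
    show (2 : ZMod 4) ^ 2 = 0 by decide, show (3 : ZMod 4) ^ 2 = 1 by decide]
  ring

theorem quadGaussSum_eight {l : ℤ} (hl : Odd l) :
    quadGaussSum 8 l = 4 * stdAddChar (l : ZMod 8) := by
  have hhalf : stdAddChar ((l : ZMod 8) * 4) = -1 := by
    rw [← stdAddChar_two_of_odd hl]
    exact_mod_cast stdAddChar_intCast_eq_of_mul_eq (by ring)
  rw [quadGaussSum, ← sum_range_natCast]
  simp only [sum_range_succ, range_zero, sum_empty, Nat.cast_ofNat, Nat.cast_zero, Nat.cast_one,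
    zero_pow two_ne_zero, one_pow, mul_zero, mul_one, AddChar.map_zero_eq_one, hhalf,
    show (2 : ZMod 8) ^ 2 = 4 by decide, show (3 : ZMod 8) ^ 2 = 1 by decide,
    show (4 : ZMod 8) ^ 2 = 0 by decide, show (5 : ZMod 8) ^ 2 = 1 by decide,
    show (6 : ZMod 8) ^ 2 = 4 by decide, show (7 : ZMod 8) ^ 2 = 1 by decide]
  ring

/-- The even `x` contribute `2 * quadGaussSum N l`; on the odd `x` the shift `x ↦ x + N`
multiplies the summand by `e(l/2) = -1`, so they cancel. -/
theorem quadGaussSum_four_mul {N : ℕ} [NeZero N] (hN : 4 ∣ N) {l : ℤ} (hl : Odd l) :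
    quadGaussSum (4 * N) l = 2 * quadGaussSum N l := by
  obtain ⟨M, rfl⟩ := hN
  have hzero : ((4 * (4 * M) : ℕ) : ZMod (4 * (4 * M))) = 0 := natCast_self _
  push_cast at hzero
  have heven : ∀ i : ℕ, stdAddChar ((l : ZMod (4 * (4 * M))) * ((2 * i : ℕ) : ZMod _) ^ 2) =
      stdAddChar ((l : ZMod (4 * M)) * (i : ZMod _) ^ 2) := fun i => by
    exact_mod_cast stdAddChar_intCast_eq_of_mul_eq (by push_cast; ring)
  have hperiodic : Periodic (fun i : ℕ => stdAddChar ((l : ZMod (4 * M)) * (i : ZMod _) ^ 2))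
      (4 * M) := fun i => by simp
  have hantiperiodic : Antiperiodic
      (fun i : ℕ => stdAddChar ((l : ZMod (4 * (4 * M))) * ((2 * i + 1 : ℕ) : ZMod _) ^ 2))
      (2 * M) := fun i => by
    have hhalf : stdAddChar ((l : ZMod (4 * (4 * M))) * (8 * (M : ZMod (4 * (4 * M))))) = -1 := by
      rw [← stdAddChar_two_of_odd hl]
      exact_mod_cast stdAddChar_intCast_eq_of_mul_eq (by push_cast; ring)
    have hshift : (l : ZMod (4 * (4 * M))) * ((2 * (i + 2 * M) + 1 : ℕ) : ZMod _) ^ 2 =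
        (l : ZMod (4 * (4 * M))) * ((2 * i + 1 : ℕ) : ZMod _) ^ 2 +
          (l : ZMod (4 * (4 * M))) * (8 * (M : ZMod (4 * (4 * M)))) := by
      push_cast
      linear_combination (l * (i + M)) * hzero
    simp only [hshift, AddChar.map_add_eq_mul, hhalf, mul_neg_one]
  have hodd := hantiperiodic.periodic_two_mul.sum_range_mul 2
  rw [hantiperiodic.sum_range_two_mul, smul_zero, show 2 * (2 * M) = 4 * M by ring] at hodd
  rw [quadGaussSum, quadGaussSum, ← sum_range_natCast, ← sum_range_natCast,
    show range (4 * (4 * M)) = range (2 * (2 * (4 * M))) by ring_nf, sum_range_two_mul, hodd,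
    add_zero, sum_congr rfl fun i _ => heven i, hperiodic.sum_range_mul, nsmul_eq_mul]
  norm_num

theorem quadGaussSum_two_pow_sq {ν : ℕ} (hν : 2 ≤ ν) {l : ℤ} (hl : Odd l) :
    quadGaussSum (2 ^ ν) l ^ 2 = 2 ^ (ν + 1) * stdAddChar (l : ZMod 4) := by
  obtain ⟨k, rfl⟩ := Nat.exists_eq_add_of_le' hν
  induction k using Nat.twoStepInduction with
  | zero =>
    rw [show quadGaussSum (2 ^ (0 + 2)) l = quadGaussSum 4 l from rfl, quadGaussSum_four]
    linear_combination 4 * sq_stdAddChar_four hl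
  | one =>
    have hsq : stdAddChar (l : ZMod 8) ^ 2 = stdAddChar (l : ZMod 4) := by
      rw [sq, ← AddChar.map_add_eq_mul, ← Int.cast_add]
      exact stdAddChar_intCast_eq_of_mul_eq (by push_cast; ring)
    rw [show quadGaussSum (2 ^ (1 + 2)) l = quadGaussSum 8 l from rfl, quadGaussSum_eight hl]
    linear_combination 16 * hsq
  | more k ih _ =>
    simp only [show 2 ^ (k + 2 + 2) = 4 * 2 ^ (k + 2) by ring]
    rw [quadGaussSum_four_mul ⟨2 ^ k, by ring⟩ hl, mul_pow, ih (by omega)]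
    ring

theorem gaussS_eq_sum_zmod (q : ℕ) [NeZero q] (k m : ℤ) :
    gaussS q k m = ∑ x : ZMod q, stdAddChar ((k : ZMod q) * x ^ 2 + (m : ZMod q) * x) := by
  rw [gaussS, ← sum_range_natCast]
  refine sum_congr rfl fun x _ => ?_
  rw [e_intCast_div]
  push_cast
  rfl

theorem gaussS_two_mul_of_mul_eq_one {q : ℕ} [NeZero q] {k : ℤ} {v : ZMod q}
    (hv : (k : ZMod q) * v = 1) (b : ℤ) :
    gaussS q k (2 * b) = stdAddChar (-v * (b : ZMod q) ^ 2) * quadGaussSum q k := by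
  rw [gaussS_eq_sum_zmod, quadGaussSum, ← AddChar.sum_mul_sq_add_two_mul _ hv]
  push_cast
  rfl

theorem kloos_eq_sum_units (q : ℕ) [NeZero q] (k n : ℤ) :
    kloos q k n = ∑ u : (ZMod q)ˣ,
      stdAddChar ((k : ZMod q) * (u : ZMod q) + (n : ZMod q) * ((u⁻¹ : (ZMod q)ˣ) : ZMod q)) := by
  have hmem : ∀ p : ℕ × ℕ, p ∈ ((range q) ×ˢ (range q)).filter
      (fun p : ℕ × ℕ => ((p.1 : ℤ) * (p.2 : ℤ)) % q = 1 % (q : ℤ)) ↔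
      p.1 < q ∧ p.2 < q ∧ (p.1 : ZMod q) * p.2 = 1 := fun p => by
    rw [mem_filter, mem_product, mem_range, mem_range, and_assoc, ← intCast_eq_intCast_iff']
    push_cast
    rfl
  refine sum_bij' (fun p hp => Units.mkOfMulEqOne _ _ ((hmem p).1 hp).2.2)
    (fun u _ => ((u : ZMod q).val, (↑u⁻¹ : ZMod q).val)) (fun _ _ => mem_univ _)
    (fun u _ => (hmem _).2 ⟨val_lt _, val_lt _, by simp⟩) (fun p hp => ?_) (fun u _ => ?_)
    (fun p hp => ?_)
  · obtain ⟨h1, h2, -⟩ := (hmem p).1 hp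
    exact Prod.ext (val_cast_of_lt h1) (val_cast_of_lt h2)
  · exact Units.ext (natCast_zmod_val _)
  · rw [e_intCast_div]
    push_cast
    rfl

theorem stdAddChar_mul_gaussS_mul_gaussS {ν : ℕ} (hν : 2 ≤ ν) {l : ℤ} (hl : Odd l)
    {v : ZMod (2 ^ ν)} (hv : (l : ZMod (2 ^ ν)) * v = 1) (a m t : ℤ) :
    stdAddChar ((-a * l : ℤ) : ZMod (2 ^ ν)) * gaussS (2 ^ ν) l (2 * m) * gaussS (2 ^ ν) l (2 * t) =
      2 ^ (ν + 1) * stdAddChar (((2 ^ (ν - 2) - a : ℤ) : ZMod (2 ^ ν)) * (l : ZMod (2 ^ ν)) +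
        ((-(m ^ 2 + t ^ 2) : ℤ) : ZMod (2 ^ ν)) * v) := by
  have hquarter : stdAddChar (l : ZMod 4) = stdAddChar ((2 ^ (ν - 2) * l : ℤ) : ZMod (2 ^ ν)) := by
    refine stdAddChar_intCast_eq_of_mul_eq ?_
    obtain ⟨k, rfl⟩ := Nat.exists_eq_add_of_le' hν
    push_cast
    ring
  rw [gaussS_two_mul_of_mul_eq_one hv, gaussS_two_mul_of_mul_eq_one hv]
  calc _ = quadGaussSum (2 ^ ν) l ^ 2 * (stdAddChar ((-a * l : ℤ) : ZMod (2 ^ ν)) *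
        stdAddChar (-v * (m : ZMod (2 ^ ν)) ^ 2) * stdAddChar (-v * (t : ZMod (2 ^ ν)) ^ 2)) := by
        ring
    _ = _ := by
      rw [quadGaussSum_two_pow_sq hν hl, hquarter, mul_assoc]
      simp only [← AddChar.map_add_eq_mul]
      congr 2
      push_cast
      ring

theorem B_eq_kloosterman (ν : ℕ) (hν : 2 ≤ ν) (a m t : ℤ) (hm : 2 ∣ m) (ht : 2 ∣ t) :
    ∑ l ∈ (Finset.range (2^ν)).filter (fun l : ℕ => ¬ 2 ∣ l),
        e (((-a * (l : ℤ) : ℤ) : ℝ) / (2^ν)) * gaussS (2^ν) (l : ℤ) m * gaussS (2^ν) (l : ℤ) t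
      = (2 : ℂ)^(ν + 1) * kloos (2^ν) (2^(ν - 2) - a) (-((m^2 + t^2) / 4)) := by
  obtain ⟨m, rfl⟩ := hm
  obtain ⟨t, rfl⟩ := ht
  have hdiv : ((2 * m) ^ 2 + (2 * t) ^ 2) / 4 = m ^ 2 + t ^ 2 := by
    rw [show (2 * m) ^ 2 + (2 * t) ^ 2 = 4 * (m ^ 2 + t ^ 2) by ring]
    exact Int.mul_ediv_cancel_left _ (by norm_num)
  have hunit : ∀ l : ℕ, IsUnit (l : ZMod (2 ^ ν)) ↔ ¬ 2 ∣ l := fun l =>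
    isUnit_natCast_iff_not_dvd_pow Nat.prime_two (by omega)
  rw [hdiv, kloos_eq_sum_units, mul_sum]
  simp only [← inv_coe_unit]
  rw [← sum_range_filter_isUnit (f := fun x =>
    (2 : ℂ) ^ (ν + 1) * stdAddChar (((2 ^ (ν - 2) - a : ℤ) : ZMod (2 ^ ν)) * x +
      ((-(m ^ 2 + t ^ 2) : ℤ) : ZMod (2 ^ ν)) * x⁻¹)), filter_congr fun l _ => hunit l]
  refine sum_congr rfl fun l hmem => ?_
  have hl : ¬ 2 ∣ l := (mem_filter.1 hmem).2
  have hodd : Odd (l : ℤ) := by rwa [Int.odd_coe_nat, ← Nat.not_even_iff_odd, even_iff_two_dvd]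
  have hinv : ((l : ℤ) : ZMod (2 ^ ν)) * (l : ZMod (2 ^ ν))⁻¹ = 1 := by
    rw [Int.cast_natCast]
    exact mul_inv_of_unit _ ((hunit l).2 hl)
  rw [show (2 : ℝ) ^ ν = ((2 ^ ν : ℕ) : ℝ) by push_cast; rfl, e_intCast_div,
    stdAddChar_mul_gaussS_mul_gaussS hν hodd hinv, Int.cast_natCast]
end

section
/- For every positive integer q and real y ≥ 1, Σ_{n > y} gcd(q,n)^{1/2}/n² ≪ τ(q)/y, with an absolute implied constant. -/
/-!
Split the sum according to `d = gcd(q, n)`: each term is at most `Σ_{d ∣ q, d ∣ n} √d / n²`.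
For a fixed divisor `d`, writing `n = d m` gives
`Σ_{n > y, d ∣ n} 1 / n² = d⁻² Σ_{m > y / d} 1 / m² ≤ 2 / (d y)`,
and `√d · 2 / (d y) ≤ 2 / y`. Summing over the `τ(q)` divisors gives the bound with `C = 2`.
-/

open Finset

lemma summable_ite_inv_sq (p : ℕ → Prop) [DecidablePred p] :
    Summable fun n : ℕ => if p n then ((n : ℝ) ^ 2)⁻¹ else 0 := by
  refine ((Real.summable_nat_pow_inv.mpr one_lt_two).indicator {n | p n}).congr fun n => ?_
  simp [Set.indicator_apply]

lemma tsum_ite_lt_inv_sq_le {t : ℝ} (ht : 0 < t) :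
    ∑' m : ℕ, (if t < m then ((m : ℝ) ^ 2)⁻¹ else 0) ≤ 2 / t := by
  refine Real.tsum_le_of_sum_le (fun m => by positivity) fun s => ?_
  have hsub : s.filter (fun m : ℕ => t < m) ⊆ Ioo ⌊t⌋₊ (s.sup id + 1) := fun m hm => by
    rw [mem_filter] at hm
    exact mem_Ioo.mpr ⟨(Nat.floor_lt ht.le).mpr hm.2, Nat.lt_succ_of_le (le_sup (f := id) hm.1)⟩
  calc ∑ m ∈ s, (if t < m then ((m : ℝ) ^ 2)⁻¹ else 0)
      = ∑ m ∈ s.filter (fun m : ℕ => t < m), ((m : ℝ) ^ 2)⁻¹ := (sum_filter _ _).symm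
    _ ≤ ∑ m ∈ Ioo ⌊t⌋₊ (s.sup id + 1), ((m : ℝ) ^ 2)⁻¹ :=
        sum_le_sum_of_subset_of_nonneg hsub fun _ _ _ => by positivity
    _ ≤ 2 / (⌊t⌋₊ + 1) := sum_Ioo_inv_sq_le _ _
    _ ≤ 2 / t := by gcongr; exact (Nat.lt_floor_add_one t).le

lemma tsum_ite_lt_dvd_inv_sq_le {d : ℕ} (hd : 0 < d) {y : ℝ} (hy : 0 < y) :
    ∑' n : ℕ, (if y < n ∧ d ∣ n then ((n : ℝ) ^ 2)⁻¹ else 0) ≤ 2 / (d * y) := by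
  have hd' : (0 : ℝ) < d := Nat.cast_pos.mpr hd
  have hsupp : Function.support (fun n : ℕ => if y < n ∧ d ∣ n then ((n : ℝ) ^ 2)⁻¹ else 0) ⊆
      Set.range (d * ·) := fun n hn => by
    obtain ⟨-, m, rfl⟩ : y < n ∧ d ∣ n := by by_contra h; simp [h] at hn
    exact ⟨m, rfl⟩
  have hterm : ∀ m : ℕ, (if y < ((d * m : ℕ) : ℝ) ∧ d ∣ d * m then (((d * m : ℕ) : ℝ) ^ 2)⁻¹ else 0)
      = ((d : ℝ) ^ 2)⁻¹ * (if y / d < m then ((m : ℝ) ^ 2)⁻¹ else 0) := fun m => by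
    simp only [dvd_mul_right, and_true, Nat.cast_mul, div_lt_iff₀ hd', mul_comm (m : ℝ)]
    split_ifs <;> simp [mul_pow, mul_comm]
  rw [← (mul_right_injective₀ hd.ne').tsum_eq hsupp]
  simp only [hterm, tsum_mul_left]
  calc ((d : ℝ) ^ 2)⁻¹ * ∑' m : ℕ, (if y / d < m then ((m : ℝ) ^ 2)⁻¹ else 0)
      ≤ ((d : ℝ) ^ 2)⁻¹ * (2 / (y / d)) := by gcongr; exact tsum_ite_lt_inv_sq_le (by positivity)
    _ = 2 / (d * y) := by field_simp

lemma ite_sqrt_gcd_div_sq_le_sum_divisors {q : ℕ} (hq : q ≠ 0) (y : ℝ) (n : ℕ) :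
    (if y < n then √(Nat.gcd q n) / (n : ℝ) ^ 2 else 0) ≤
      ∑ d ∈ q.divisors, √d * (if y < n ∧ d ∣ n then ((n : ℝ) ^ 2)⁻¹ else 0) := by
  have hnonneg : ∀ d ∈ q.divisors, 0 ≤ √d * (if y < n ∧ d ∣ n then ((n : ℝ) ^ 2)⁻¹ else 0) :=
    fun d _ => by positivity
  split_ifs with hn
  · have hgcd : Nat.gcd q n ∈ q.divisors := Nat.mem_divisors.mpr ⟨Nat.gcd_dvd_left _ _, hq⟩
    refine le_trans (le_of_eq ?_) (single_le_sum hnonneg hgcd)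
    simp [hn, Nat.gcd_dvd_right, div_eq_mul_inv]
  · exact sum_nonneg hnonneg

lemma sqrt_mul_two_div_le {d : ℕ} {y : ℝ} (hy : 0 < y) : √d * (2 / (d * y)) ≤ 2 / y := by
  rcases Nat.eq_zero_or_pos d with rfl | hd
  · rw [Nat.cast_zero, Real.sqrt_zero, zero_mul]; positivity
  calc √d * (2 / (d * y)) = √d / d * (2 / y) := by field_simp
    _ ≤ 1 * (2 / y) := by
        gcongr
        exact div_le_one_of_le₀ (Real.sqrt_le_self_iff.mpr (.inr (Nat.one_le_cast.mpr hd)))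
          (Nat.cast_nonneg d)
    _ = 2 / y := one_mul _

theorem gcd_tail_sum_sq : ∃ C : ℝ, 0 < C ∧ ∀ (q : ℕ), 0 < q → ∀ (y : ℝ), 1 ≤ y →
    (∑' n : ℕ, if y < (n : ℝ) then Real.sqrt (Nat.gcd q n) / (n : ℝ)^2 else 0) ≤
      C * (q.divisors.card : ℝ) / y := by
  refine ⟨2, two_pos, fun q hq y hy => ?_⟩
  have hy0 : 0 < y := one_pos.trans_le hy
  have hsummable : ∀ d ∈ q.divisors,
      Summable fun n : ℕ => √d * (if y < n ∧ d ∣ n then ((n : ℝ) ^ 2)⁻¹ else 0) :=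
    fun d _ => (summable_ite_inv_sq _).mul_left _
  have hpointwise := ite_sqrt_gcd_div_sq_le_sum_divisors hq.ne' y
  calc (∑' n : ℕ, if y < (n : ℝ) then √(Nat.gcd q n) / (n : ℝ) ^ 2 else 0)
      ≤ ∑' n : ℕ, ∑ d ∈ q.divisors, √d * (if y < n ∧ d ∣ n then ((n : ℝ) ^ 2)⁻¹ else 0) :=
        (summable_sum hsummable).of_nonneg_of_le (fun n => by positivity) hpointwise
          |>.tsum_le_tsum hpointwise (summable_sum hsummable)
    _ = ∑ d ∈ q.divisors, √d * ∑' n : ℕ, (if y < n ∧ d ∣ n then ((n : ℝ) ^ 2)⁻¹ else 0) := by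
        simp only [Summable.tsum_finsetSum hsummable, tsum_mul_left]
    _ ≤ ∑ d ∈ q.divisors, √d * (2 / (d * y)) := sum_le_sum fun d hd => by
        gcongr; exact tsum_ite_lt_dvd_inv_sq_le (Nat.pos_of_mem_divisors hd) hy0
    _ ≤ ∑ _d ∈ q.divisors, 2 / y := sum_le_sum fun d _ => sqrt_mul_two_div_le hy0
    _ = 2 * (q.divisors.card : ℝ) / y := by rw [sum_const, nsmul_eq_mul]; ring
end

section
/- For every positive integer q and real y ≥ 1, Σ_{n > y} gcd(q,n)^{1/2}/n^{3/2} ≪ τ(q)·y^{−1/2}, with an absolute implied constant. -/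
/-!
Bound `√(gcd q n)` by the sum of `√d` over the divisors `d` of `q` that divide `n`. The sum then
splits into one sum per divisor `d ∣ q`; substituting `n = d m`, that sum is
`d⁻¹ ∑_{m > y/d} m^(-3/2) ≤ 3 d⁻¹ (y/d)^(-1/2) ≤ 3 y^(-1/2)`. The tail bound
`∑_{m > x} m^(-3/2) ≤ 3 x^(-1/2)`, valid for every `x > 0`, comes from telescoping
`m^(-3/2) ≤ 2 (m - 1/2)^(-1/2) - 2 (m + 1/2)^(-1/2)`.
-/

open Finset

lemma rpow_three_halves_eq_mul_sqrt {t : ℝ} (ht : 0 ≤ t) : t ^ ((3 : ℝ) / 2) = t * √t := by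
  rw [Real.sqrt_eq_rpow, ← Real.rpow_one_add' ht (by norm_num)]
  norm_num

lemma one_div_rpow_three_halves_le_sub {t : ℝ} (ht : 1 / 2 < t) :
    1 / t ^ ((3 : ℝ) / 2) ≤ 2 / √(t - 1 / 2) - 2 / √(t + 1 / 2) := by
  obtain ⟨a, ha, ha2⟩ : ∃ a, 0 < a ∧ a ^ 2 = t - 1 / 2 :=
    ⟨_, Real.sqrt_pos.2 (by linarith), Real.sq_sqrt (by linarith)⟩
  obtain ⟨b, hb, hb2⟩ : ∃ b, 0 < b ∧ b ^ 2 = t + 1 / 2 :=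
    ⟨_, Real.sqrt_pos.2 (by linarith), Real.sq_sqrt (by linarith)⟩
  obtain ⟨s, hs, hs2⟩ : ∃ s, 0 < s ∧ s ^ 2 = t :=
    ⟨_, Real.sqrt_pos.2 (by linarith), Real.sq_sqrt (by linarith)⟩
  rw [← ha2, ← hb2, ← hs2, Real.sqrt_sq ha.le, Real.sqrt_sq hb.le,
    rpow_three_halves_eq_mul_sqrt (by positivity), Real.sqrt_sq hs.le]
  -- `ab ≤ s²` and `a + b ≤ 2s` by AM-GM, since `a² + b² = 2s²`; and `(b - a)(a + b) = 1`.
  have hab : a * b ≤ s ^ 2 := by nlinarith [sq_nonneg (a - b)]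
  have hsum : a + b ≤ 2 * s := by nlinarith [sq_nonneg (a - b), sq_nonneg (a + b - 2 * s)]
  rw [div_sub_div _ _ ha.ne' hb.ne', div_le_div_iff₀ (by positivity) (by positivity)]
  have hdiff : (b - a) * (a + b) = 1 := by nlinarith
  have hba : 0 < b - a := by nlinarith
  calc 1 * (a * b) = (b - a) * (a * b * (a + b)) := by rw [← hdiff]; ring
    _ ≤ (b - a) * (s ^ 2 * (2 * s)) := by gcongr
    _ = _ := by ring

lemma sum_ite_lt_one_div_rpow_three_halves_le {x : ℝ} (hx : 0 < x) (F : Finset ℕ) :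
    ∑ m ∈ F, (if x < m then 1 / (m : ℝ) ^ ((3 : ℝ) / 2) else 0) ≤ 3 / √x := by
  set N := ⌊x⌋₊
  set K := F.sup id
  let v : ℕ → ℝ := fun i => -(2 / √((i : ℝ) - 1 / 2))
  have hsub : F.filter (fun m : ℕ => x < m) ⊆ Ico (N + 1) (N + K + 1) := by
    intro m hm
    obtain ⟨hmF, hxm⟩ := mem_filter.1 hm
    have : m ≤ K := le_sup (f := id) hmF
    have : N < m := (Nat.floor_lt hx.le).2 hxm
    rw [mem_Ico]
    omega
  have hN : (0 : ℝ) < N + 1 / 2 := by positivity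
  rw [← sum_filter]
  calc ∑ m ∈ F.filter (fun m : ℕ => x < m), 1 / (m : ℝ) ^ ((3 : ℝ) / 2)
      ≤ ∑ m ∈ Ico (N + 1) (N + K + 1), 1 / (m : ℝ) ^ ((3 : ℝ) / 2) :=
        sum_le_sum_of_subset_of_nonneg hsub fun _ _ _ => by positivity
    _ ≤ ∑ m ∈ Ico (N + 1) (N + K + 1), (v (m + 1) - v m) := by
        refine sum_le_sum fun m hm => ?_
        have hm1 : (1 : ℝ) ≤ m := by exact_mod_cast (Nat.le_add_left 1 N).trans (mem_Ico.1 hm).1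
        refine (one_div_rpow_three_halves_le_sub (t := m) (by linarith)).trans_eq ?_
        simp only [v]; push_cast; ring_nf
    _ = 2 / √(N + 1 / 2) - 2 / √(N + K + 1 / 2) := by
        rw [sum_Ico_sub _ (by omega)]; simp only [v]; push_cast; ring_nf
    _ ≤ 2 / √(N + 1 / 2) := sub_le_self _ (by positivity)
    _ ≤ 3 / √(N + 1) := by
        rw [div_le_div_iff₀ (by positivity) (by positivity)]
        nlinarith [Real.sq_sqrt (show (0 : ℝ) ≤ N + 1 by positivity), Real.sq_sqrt hN.le,
          Real.sqrt_nonneg ((N : ℝ) + 1), Real.sqrt_nonneg ((N : ℝ) + 1 / 2)]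
    _ ≤ 3 / √x := by
        gcongr
        exact (Nat.lt_floor_add_one x).le

lemma sum_ite_lt_and_dvd_sqrt_div_rpow_le {y : ℝ} (hy : 0 < y) {d : ℕ} (hd : 0 < d)
    (F : Finset ℕ) :
    ∑ n ∈ F, (if y < n ∧ d ∣ n then √d / (n : ℝ) ^ ((3 : ℝ) / 2) else 0) ≤ 3 / √y := by
  have hd' : (0 : ℝ) < d := by exact_mod_cast hd
  have hinj : Set.InjOn (d * ·) ((d * ·) ⁻¹' ↑F) := (mul_right_injective₀ hd.ne').injOn
  rw [← sum_preimage (d * ·) F hinj _ fun n _ hn => if_neg fun ⟨_, c, hc⟩ => hn ⟨c, hc.symm⟩]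
  have hterm (m : ℕ) : (if y < ((d * m : ℕ) : ℝ) ∧ d ∣ d * m
      then √d / ((d * m : ℕ) : ℝ) ^ ((3 : ℝ) / 2) else 0)
      = 1 / d * (if y / d < m then 1 / (m : ℝ) ^ ((3 : ℝ) / 2) else 0) := by
    simp only [Nat.cast_mul, dvd_mul_right, and_true, ← div_lt_iff₀' hd']
    split_ifs
    · rw [Real.mul_rpow hd'.le m.cast_nonneg, rpow_three_halves_eq_mul_sqrt hd'.le]
      field_simp
    · rw [mul_zero]
  have hsqrt_d : 1 ≤ √(d : ℝ) := Real.one_le_sqrt.2 (by exact_mod_cast hd)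
  rw [sum_congr rfl fun m _ => hterm m, ← mul_sum]
  calc 1 / (d : ℝ) * ∑ m ∈ F.preimage (d * ·) hinj,
        (if y / d < m then 1 / (m : ℝ) ^ ((3 : ℝ) / 2) else 0)
      ≤ 1 / d * (3 / √(y / d)) := by
        gcongr
        exact sum_ite_lt_one_div_rpow_three_halves_le (by positivity) _
    _ = 3 / √y / √d := by
        rw [Real.sqrt_div hy.le]
        field_simp
        rw [Real.sq_sqrt hd'.le]
    _ ≤ 3 / √y := div_le_self (by positivity) hsqrt_d

lemma le_sum_divisors_ite_dvd {M : Type*} [AddCommMonoid M] [PartialOrder M]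
    [IsOrderedAddMonoid M] {f : ℕ → M} (hf : ∀ d, 0 ≤ f d) {q : ℕ} (hq : q ≠ 0) (n : ℕ) :
    f (q.gcd n) ≤ ∑ d ∈ q.divisors, if d ∣ n then f d else 0 := by
  calc f (q.gcd n) = if q.gcd n ∣ n then f (q.gcd n) else 0 := (if_pos (q.gcd_dvd_right n)).symm
    _ ≤ ∑ d ∈ q.divisors, if d ∣ n then f d else 0 :=
      single_le_sum (f := fun d => if d ∣ n then f d else 0)
        (fun d _ => by split_ifs <;> simp [hf]) (Nat.mem_divisors.2 ⟨q.gcd_dvd_left n, hq⟩)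

theorem gcd_tail_sum_threehalves : ∃ C : ℝ, 0 < C ∧ ∀ (q : ℕ), 0 < q → ∀ (y : ℝ), 1 ≤ y →
    (∑' n : ℕ, if y < (n : ℝ) then Real.sqrt (Nat.gcd q n) / (n : ℝ)^((3:ℝ)/2) else 0) ≤
      C * (q.divisors.card : ℝ) / Real.sqrt y := by
  refine ⟨3, by norm_num, fun q hq y hy => tsum_le_of_sum_le' (by positivity) fun F => ?_⟩
  have hy' : 0 < y := by linarith
  have hsplit (n : ℕ) : (if y < (n : ℝ) then √(q.gcd n) / (n : ℝ) ^ ((3 : ℝ) / 2) else 0) ≤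
      ∑ d ∈ q.divisors, if y < n ∧ d ∣ n then √d / (n : ℝ) ^ ((3 : ℝ) / 2) else 0 := by
    by_cases hn : y < (n : ℝ)
    · simp only [hn, true_and, if_true]
      exact le_sum_divisors_ite_dvd (f := fun d : ℕ => √d / (n : ℝ) ^ ((3 : ℝ) / 2))
        (fun _ => by positivity) hq.ne' n
    · simp [hn]
  calc ∑ n ∈ F, (if y < (n : ℝ) then √(q.gcd n) / (n : ℝ) ^ ((3 : ℝ) / 2) else 0)
      ≤ ∑ d ∈ q.divisors, ∑ n ∈ F,
          (if y < n ∧ d ∣ n then √d / (n : ℝ) ^ ((3 : ℝ) / 2) else 0) := by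
        rw [sum_comm]; exact sum_le_sum fun n _ => hsplit n
    _ ≤ ∑ _d ∈ q.divisors, 3 / √y := sum_le_sum fun d hd =>
        sum_ite_lt_and_dvd_sqrt_div_rpow_le hy' (Nat.pos_of_mem_divisors hd) F
    _ = 3 * (q.divisors.card : ℝ) / √y := by rw [sum_const, nsmul_eq_mul]; ring
end

section
/- Let q, n be positive integers and x ≥ 1 a real number. Then the integral E_n = ∫₀^{√(x/2)} sin(2πnt/q) · t/√(x−t²) dt satisfies |E_n| ≪ q/n, with an absolute implied constant. -/
/-!
The weight `t / √(x - t²)` increases from `0` to `1` on `[0, √(x/2)]`. Integrating by parts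
against `sin (ω t)` with `ω = 2πn/q`, both the boundary term and the remaining integral are at
most `1/ω` (the latter because the derivative of the weight is nonnegative and integrates to `1`),
so `|E_n| ≤ 2/ω = q/(πn)`.
-/

open Real Set intervalIntegral

theorem abs_integral_mul_sin_le_of_deriv_nonneg {f f' : ℝ → ℝ} {a b ω : ℝ} (hab : a ≤ b)
    (hω : 0 < ω) (hf : ∀ t ∈ Icc a b, HasDerivAt f (f' t) t)
    (hf'int : IntervalIntegrable f' MeasureTheory.volume a b) (hf' : ∀ t ∈ Icc a b, 0 ≤ f' t)
    (ha : 0 ≤ f a) :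
    |∫ t in a..b, f t * sin (ω * t)| ≤ 2 * f b / ω := by
  set g : ℝ → ℝ := fun t => -cos (ω * t) / ω
  have hg_le : ∀ t, |g t| ≤ 1 / ω := fun t => by
    simpa [g, abs_div, abs_of_pos hω] using div_le_div_of_nonneg_right (abs_cos_le_one (ω * t)) hω.le
  have hg : ∀ t ∈ uIcc a b, HasDerivAt g (sin (ω * t)) t := fun t _ => by
    simpa [g, mul_comm ω, mul_div_assoc, hω.ne'] using
      (((hasDerivAt_id t).const_mul ω).cos.neg.div_const ω)
  rw [← uIcc_of_le hab] at hf hf'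
  have hftc : ∫ t in a..b, f' t = f b - f a := integral_eq_sub_of_hasDerivAt hf hf'int
  have hf_mono : f a ≤ f b := by
    rw [← sub_nonneg, ← hftc]
    exact integral_nonneg hab fun t ht => hf' t (Icc_subset_uIcc ht)
  have hrest : |∫ t in a..b, f' t * g t| ≤ (f b - f a) / ω := by
    calc |∫ t in a..b, f' t * g t| ≤ ∫ t in a..b, f' t * (1 / ω) := by
          rw [← Real.norm_eq_abs]
          refine norm_integral_le_of_norm_le hab (.of_forall fun t ht => ?_) (hf'int.mul_const _)
          have := hf' t (Ioc_subset_Icc_self.trans Icc_subset_uIcc ht)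
          rw [Real.norm_eq_abs, abs_mul, abs_of_nonneg this]
          exact mul_le_mul_of_nonneg_left (hg_le t) this
      _ = (f b - f a) / ω := by rw [integral_mul_const, hftc, mul_one_div]
  rw [integral_mul_deriv_eq_deriv_mul hf hg hf'int
    ((continuous_sin.comp (continuous_const_mul ω)).intervalIntegrable a b)]
  calc |f b * g b - f a * g a - ∫ t in a..b, f' t * g t|
      ≤ f b * (1 / ω) + f a * (1 / ω) + (f b - f a) / ω := by
        refine (abs_sub _ _).trans (add_le_add ((abs_sub _ _).trans (add_le_add ?_ ?_)) hrest)
        · rw [abs_mul, abs_of_nonneg (ha.trans hf_mono)]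
          exact mul_le_mul_of_nonneg_left (hg_le b) (ha.trans hf_mono)
        · rw [abs_mul, abs_of_nonneg ha]
          exact mul_le_mul_of_nonneg_left (hg_le a) ha
    _ = 2 * f b / ω := by ring

theorem hasDerivAt_div_sqrt_sub_sq {x t : ℝ} (ht : t ^ 2 < x) :
    HasDerivAt (fun t => t / √(x - t ^ 2)) (x / √(x - t ^ 2) ^ 3) t := by
  have hpos : 0 < x - t ^ 2 := sub_pos.mpr ht
  have hs : HasDerivAt (fun t => √(x - t ^ 2)) (-(2 * t) / (2 * √(x - t ^ 2))) t := by
    simpa using ((hasDerivAt_pow 2 t).const_sub x).sqrt hpos.ne'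
  refine ((hasDerivAt_id' t).fun_div hs (sqrt_pos.mpr hpos).ne').congr_deriv ?_
  have hsq := sq_sqrt hpos.le
  field_simp
  linear_combination hsq

theorem integral_bound : ∃ C : ℝ, 0 < C ∧ ∀ (q n : ℕ), 0 < q → 0 < n → ∀ (x : ℝ), 1 ≤ x →
    |∫ t in (0:ℝ)..(Real.sqrt (x/2)),
        Real.sin (2 * Real.pi * (n : ℝ) * t / q) * (t / Real.sqrt (x - t^2))| ≤
      C * q / n := by
  refine ⟨1, one_pos, fun q n hq hn x hx => ?_⟩
  have hqR : (0 : ℝ) < q := by exact_mod_cast hq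
  have hnR : (0 : ℝ) < n := by exact_mod_cast hn
  have hω : 0 < 2 * π * n / q := by positivity
  have hsq_lt : ∀ t ∈ Icc 0 √(x / 2), t ^ 2 < x := fun t ht => by
    nlinarith [ht.1, ht.2, sq_sqrt (show 0 ≤ x / 2 by linarith)]
  have hend : √(x / 2) / √(x - √(x / 2) ^ 2) = 1 := by
    rw [sq_sqrt (by linarith), show x - x / 2 = x / 2 by ring, div_self (by positivity)]
  have hderiv_cont : ContinuousOn (fun t => x / √(x - t ^ 2) ^ 3) (uIcc 0 √(x / 2)) := by
    refine continuousOn_const.div (by fun_prop) fun t ht => ?_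
    rw [uIcc_of_le (sqrt_nonneg _)] at ht
    exact pow_ne_zero 3 (sqrt_pos.mpr (sub_pos.mpr (hsq_lt t ht))).ne'
  have hweighted := abs_integral_mul_sin_le_of_deriv_nonneg (sqrt_nonneg (x / 2)) hω
    (fun t ht => hasDerivAt_div_sqrt_sub_sq (hsq_lt t ht)) hderiv_cont.intervalIntegrable
    (fun t _ => div_nonneg (by linarith) (pow_nonneg (sqrt_nonneg _) 3)) (by simp)
  rw [hend] at hweighted
  calc _ = |∫ t in (0 : ℝ)..√(x / 2), t / √(x - t ^ 2) * sin (2 * π * n / q * t)| := by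
        congr 2; ext t; rw [mul_comm, mul_div_right_comm]
    _ ≤ 2 * 1 / (2 * π * n / q) := hweighted
    _ ≤ 1 * q / n := by
        rw [div_le_div_iff₀ hω hnR]
        field_simp
        nlinarith [pi_gt_three]
end

section
/- For every integer M ≥ 2 there exist complex coefficients c_n (n ∈ ℤ) with min(1, 1/(M‖y‖)) = Σ_{n∈ℤ} c_n e(ny) for all real y, satisfying c_n ≪ M^{−1} log M for all n and c_n ≪ M/n² for n ≠ 0, where ‖y‖ is the distance from y to the nearest integer and min(1, 1/0) is interpreted as 1. -/
open Real intervalIntegral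
open MeasureTheory (volume)

namespace FourierMin

instance : Fact ((0 : ℝ) < 1) := ⟨one_pos⟩

noncomputable def truncInv (m x : ℝ) : ℝ := (max 1 (m * |x|))⁻¹

section truncInv

variable {m : ℝ}

@[fun_prop]
lemma continuous_truncInv (m : ℝ) : Continuous (truncInv m) :=
  (continuous_const.max (continuous_const.mul continuous_abs)).inv₀ fun _ => by positivity

lemma truncInv_pos (m x : ℝ) : 0 < truncInv m x := inv_pos.2 (by positivity)

@[simp] lemma truncInv_abs (m x : ℝ) : truncInv m |x| = truncInv m x := by simp [truncInv]

@[simp] lemma truncInv_neg (m x : ℝ) : truncInv m (-x) = truncInv m x := by simp [truncInv]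

lemma truncInv_of_abs_le (hm : 0 ≤ m) {x : ℝ} (hx : |x| ≤ m⁻¹) : truncInv m x = 1 := by
  rw [truncInv, max_eq_left, inv_one]
  calc m * |x| ≤ m * m⁻¹ := by gcongr
    _ ≤ 1 := mul_inv_le_one

lemma truncInv_of_inv_le (hm : 0 < m) {x : ℝ} (hx : m⁻¹ ≤ x) : truncInv m x = m⁻¹ * x⁻¹ := by
  have hx0 : 0 < x := (inv_pos.2 hm).trans_le hx
  rw [truncInv, abs_of_pos hx0, max_eq_right ((inv_le_iff_one_le_mul₀' hm).1 hx), mul_inv]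

lemma ite_min_eq_truncInv (hm : 0 < m) (s : ℝ) :
    (if |s| = 0 then 1 else min 1 (1 / (m * |s|))) = truncInv m s := by
  split_ifs with hs
  · simp [truncInv, hs]
  · have : 0 < m * |s| := by positivity
    rcases le_total (m * |s|) 1 with h | h
    · rw [truncInv, max_eq_left h, inv_one, min_eq_left ((one_le_div this).2 h)]
    · rw [truncInv, max_eq_right h, min_eq_right ((div_le_one this).2 h), one_div]

end truncInv

noncomputable def truncInvCircle (m : ℝ) : C(UnitAddCircle, ℂ) :=
  ⟨fun x => (truncInv m ‖x‖ : ℂ),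
    Complex.continuous_ofReal.comp ((continuous_truncInv m).comp continuous_norm)⟩

lemma truncInvCircle_coe (m y : ℝ) : truncInvCircle m y = truncInv m (y - round y) := by
  simp [truncInvCircle, UnitAddCircle.norm_eq]

lemma integral_fourier_neg_mul_of_even {T : ℝ} [Fact (0 < T)] {f : ℝ → ℝ}
    (hf : ∀ x, f (-x) = f x) {a : ℝ} (hfi : IntervalIntegrable f volume (-a) a) (n : ℤ) :
    ∫ x in -a..a, fourier (-n) (x : AddCircle T) * (f x : ℂ) =
      ((2 * ∫ x in 0..a, cos (2 * π * n * x / T) * f x : ℝ) : ℂ) := by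
  have hint (k : ℤ) : IntervalIntegrable
      (fun x : ℝ => fourier k (x : AddCircle T) * (f x : ℂ)) volume (-a) a :=
    IntervalIntegrable.continuousOn_mul ⟨hfi.1.ofReal, hfi.2.ofReal⟩
      ((map_continuous (fourier k)).comp (AddCircle.continuous_mk' T)).continuousOn
  have h0 : (0 : ℝ) ∈ Set.uIcc (-a) a := by
    rcases le_total 0 a with h | h <;> simp [h]
  have hint₀ (k : ℤ) := (hint k).mono_set (Set.uIcc_subset_uIcc_right h0)
  have hreflect : ∫ x in -a..0, fourier (-n) (x : AddCircle T) * (f x : ℂ) =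
      ∫ x in 0..a, fourier n (x : AddCircle T) * (f x : ℂ) := by
    have hsymm (x : ℝ) : fourier n (x : AddCircle T) * (f x : ℂ) =
        fourier (-n) ((-x : ℝ) : AddCircle T) * (f (-x) : ℂ) := by
      simp only [fourier_coe_apply, hf]
      push_cast
      ring_nf
    simp_rw [hsymm, integral_comp_neg (fun x => fourier (-n) (x : AddCircle T) * (f x : ℂ)),
      neg_zero]
  rw [← integral_add_adjacent_intervals (b := 0)
      ((hint (-n)).mono_set (Set.uIcc_subset_uIcc_left h0)) (hint₀ (-n)), hreflect,
    ← integral_add (hint₀ n) (hint₀ (-n)), Complex.ofReal_mul, ← intervalIntegral.integral_ofReal,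
    ← intervalIntegral.integral_const_mul]
  refine integral_congr fun x _ => ?_
  simp only [fourier_coe_apply]
  push_cast
  rw [← mul_assoc, Complex.two_cos, ← add_mul]
  congr 3 <;> ring

lemma fourierCoeff_truncInvCircle (m : ℝ) (n : ℤ) :
    fourierCoeff (truncInvCircle m) n =
      ((2 * ∫ x in (0 : ℝ)..2⁻¹, cos (2 * π * n * x) * truncInv m x : ℝ) : ℂ) := by
  rw [fourierCoeff_eq_intervalIntegral _ n (-2⁻¹), show (-2⁻¹ + 1 : ℝ) = 2⁻¹ by norm_num,
    one_div_one, one_smul]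
  have hcoe : ∀ x ∈ Set.uIcc (-2⁻¹ : ℝ) 2⁻¹, fourier (-n) (x : UnitAddCircle) • truncInvCircle m x =
      fourier (-n) (x : UnitAddCircle) * (truncInv m x : ℂ) := by
    intro x hx
    rw [Set.uIcc_of_le (by norm_num)] at hx
    have hnorm : ‖(x : UnitAddCircle)‖ = |x| :=
      (AddCircle.norm_coe_eq_abs_iff 1 one_ne_zero).2 (by simpa using abs_le.2 hx)
    simp [truncInvCircle, hnorm]
  rw [integral_congr hcoe, integral_fourier_neg_mul_of_even (truncInv_neg m)
    ((continuous_truncInv m).intervalIntegrable _ _)]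
  simp

section integration

variable {f f' : ℝ → ℝ} {a b ω : ℝ}

lemma integral_cos_mul_eq (hω : ω ≠ 0) (hf : ∀ x ∈ Set.uIcc a b, HasDerivAt f (f' x) x)
    (hf' : IntervalIntegrable f' volume a b) :
    ∫ x in a..b, cos (ω * x) * f x =
      (sin (ω * b) * f b - sin (ω * a) * f a - ∫ x in a..b, sin (ω * x) * f' x) / ω := by
  have hsin (x : ℝ) : HasDerivAt (fun x => sin (ω * x) / ω) (cos (ω * x)) x := by
    have := ((hasDerivAt_id x).const_mul ω).sin.div_const ω
    rwa [id, mul_one, mul_div_cancel_right₀ _ hω] at this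
  have := integral_mul_deriv_eq_deriv_mul (fun x _ => hsin x) hf
    (Continuous.intervalIntegrable (by fun_prop) _ _) hf'
  simp only [div_mul_eq_mul_div, intervalIntegral.integral_div] at this
  rw [eq_div_iff hω]
  field_simp at this
  linarith

lemma integral_sin_mul_eq (hω : ω ≠ 0) (hf : ∀ x ∈ Set.uIcc a b, HasDerivAt f (f' x) x)
    (hf' : IntervalIntegrable f' volume a b) :
    ∫ x in a..b, sin (ω * x) * f x =
      (cos (ω * a) * f a - cos (ω * b) * f b + ∫ x in a..b, cos (ω * x) * f' x) / ω := by
  have hcos (x : ℝ) : HasDerivAt (fun x => -cos (ω * x) / ω) (sin (ω * x)) x := by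
    have := ((hasDerivAt_id x).const_mul ω).cos.neg.div_const ω
    rwa [id, mul_one, neg_mul, neg_neg, mul_div_cancel_right₀ _ hω] at this
  have := integral_mul_deriv_eq_deriv_mul (fun x _ => hcos x) hf
    (Continuous.intervalIntegrable (by fun_prop) _ _) hf'
  simp only [div_mul_eq_mul_div, intervalIntegral.integral_div, neg_mul,
    intervalIntegral.integral_neg] at this
  rw [eq_div_iff hω]
  field_simp at this
  linarith

lemma abs_integral_sin_mul_le_of_antitone (hab : a ≤ b) (hω : ω ≠ 0)
    (hf : ∀ x ∈ Set.uIcc a b, HasDerivAt f (f' x) x)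
    (hf' : IntervalIntegrable f' volume a b)
    (hf'_nonpos : ∀ x ∈ Set.Icc a b, f' x ≤ 0) (hfb : 0 ≤ f b) :
    |∫ x in a..b, sin (ω * x) * f x| ≤ 2 * f a / |ω| := by
  have hftc : ∫ x in a..b, f' x = f b - f a := integral_eq_sub_of_hasDerivAt hf hf'
  have hvar : |∫ x in a..b, cos (ω * x) * f' x| ≤ f a - f b := calc
    _ ≤ ∫ x in a..b, |cos (ω * x) * f' x| := abs_integral_le_integral_abs hab
    _ ≤ ∫ x in a..b, -f' x := by
      refine integral_mono_on hab (hf'.continuousOn_mul (by fun_prop)).abs hf'.neg fun x hx => ?_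
      rw [abs_mul, abs_of_nonpos (hf'_nonpos x hx)]
      exact mul_le_of_le_one_left (neg_nonneg.2 (hf'_nonpos x hx)) (abs_cos_le_one _)
    _ = f a - f b := by rw [intervalIntegral.integral_neg, hftc, neg_sub]
  have hfa : f b ≤ f a := by linarith [abs_nonneg (∫ x in a..b, cos (ω * x) * f' x)]
  have hcos_mul (t y : ℝ) (hy : 0 ≤ y) : |cos t * y| ≤ y := by
    rw [abs_mul, abs_of_nonneg hy]
    exact mul_le_of_le_one_left hy (abs_cos_le_one t)
  have ha := abs_le.1 (hcos_mul (ω * a) (f a) (hfb.trans hfa))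
  have hb := abs_le.1 (hcos_mul (ω * b) (f b) hfb)
  have hv := abs_le.1 hvar
  rw [integral_sin_mul_eq hω hf hf', abs_div, div_le_div_iff_of_pos_right (abs_pos.2 hω), abs_le]
  constructor <;> linarith

lemma abs_integral_sin_mul_inv_sq_le (ha : 0 < a) (hab : a ≤ b) (hω : ω ≠ 0) :
    |∫ x in a..b, sin (ω * x) * (x ^ 2)⁻¹| ≤ 2 * (a ^ 2)⁻¹ / |ω| := by
  have hpos : ∀ x ∈ Set.uIcc a b, 0 < x := fun x hx =>
    ha.trans_le (Set.uIcc_of_le hab ▸ hx).1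
  refine abs_integral_sin_mul_le_of_antitone (f' := fun x => -(2 * x) / (x ^ 2) ^ 2) hab hω
    (fun x hx => ?_) ?_ (fun x hx => ?_) (by positivity)
  · simpa using (hasDerivAt_pow 2 x).fun_inv (pow_ne_zero 2 (hpos x hx).ne')
  · exact ContinuousOn.intervalIntegrable (by
      refine ContinuousOn.div (by fun_prop) (by fun_prop) fun x hx => ?_
      exact pow_ne_zero 2 (pow_ne_zero 2 (hpos x hx).ne'))
  · have : 0 ≤ x := ha.le.trans hx.1
    exact div_nonpos_of_nonpos_of_nonneg (by linarith) (by positivity)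

end integration

section coefficients

variable {m : ℝ}

lemma integral_mul_truncInv (hm : 2 ≤ m) {φ : ℝ → ℝ} (hφ : Continuous φ) :
    ∫ x in (0 : ℝ)..2⁻¹, φ x * truncInv m x =
      (∫ x in (0 : ℝ)..m⁻¹, φ x) + m⁻¹ * ∫ x in m⁻¹..2⁻¹, φ x * x⁻¹ := by
  have hm0 : 0 < m := by linarith
  have hmh : m⁻¹ ≤ 2⁻¹ := inv_anti₀ two_pos hm
  have hint (a b : ℝ) :
      IntervalIntegrable (fun x => φ x * truncInv m x) volume a b :=
    (hφ.mul (continuous_truncInv m)).intervalIntegrable a b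
  rw [← integral_add_adjacent_intervals (b := m⁻¹) (hint _ _) (hint _ _),
    ← intervalIntegral.integral_const_mul]
  congr 1 <;> refine integral_congr fun x hx => ?_
  · rw [Set.uIcc_of_le (inv_nonneg.2 hm0.le)] at hx
    have hx' : |x| ≤ m⁻¹ := abs_le.2 ⟨by linarith [hx.1, inv_pos.2 hm0], hx.2⟩
    rw [truncInv_of_abs_le hm0.le hx', mul_one]
  · rw [Set.uIcc_of_le hmh] at hx
    rw [truncInv_of_inv_le hm0 hx.1]
    ring

lemma integral_truncInv (hm : 2 ≤ m) :
    ∫ x in (0 : ℝ)..2⁻¹, truncInv m x = m⁻¹ * (1 + log (m / 2)) := by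
  have hm0 : 0 < m := by linarith
  have h0 : (0 : ℝ) ∉ Set.uIcc m⁻¹ 2⁻¹ := by
    rw [Set.uIcc_of_le (inv_anti₀ two_pos hm)]
    exact fun h => (inv_pos.2 hm0).not_ge h.1
  have := integral_mul_truncInv hm (φ := fun _ => 1) continuous_const
  simp only [one_mul] at this
  rw [this, integral_one, integral_inv h0, show (2⁻¹ / m⁻¹ : ℝ) = m / 2 by field_simp]
  ring

lemma norm_fourierCoeff_truncInvCircle_le (hm : 2 ≤ m) (n : ℤ) :
    ‖fourierCoeff (truncInvCircle m) n‖ ≤ 2 * m⁻¹ * (1 + log (m / 2)) := by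
  rw [fourierCoeff_truncInvCircle, Complex.norm_real, Real.norm_eq_abs, abs_mul, abs_two,
    mul_assoc 2 m⁻¹, ← integral_truncInv hm]
  gcongr
  calc _ ≤ ∫ x in (0 : ℝ)..2⁻¹, |cos (2 * π * n * x) * truncInv m x| :=
        abs_integral_le_integral_abs (by norm_num)
    _ ≤ ∫ x in (0 : ℝ)..2⁻¹, truncInv m x := by
      refine integral_mono_on (by norm_num)
        (Continuous.intervalIntegrable (by fun_prop) _ _)
        ((continuous_truncInv m).intervalIntegrable _ _) fun x _ => ?_
      rw [abs_mul, abs_of_pos (truncInv_pos m x)]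
      exact mul_le_of_le_one_left (truncInv_pos m x).le (abs_cos_le_one _)

lemma integral_cos_mul_truncInv (hm : 2 ≤ m) {ω : ℝ} (hω : ω ≠ 0) (hω2 : sin (ω * 2⁻¹) = 0) :
    ∫ x in (0 : ℝ)..2⁻¹, cos (ω * x) * truncInv m x =
      (m * ω)⁻¹ * ∫ x in m⁻¹..2⁻¹, sin (ω * x) * (x ^ 2)⁻¹ := by
  have hm0 : 0 < m := by linarith
  have hpos : ∀ x ∈ Set.uIcc m⁻¹ 2⁻¹, 0 < x := fun x hx =>
    (inv_pos.2 hm0).trans_le (Set.uIcc_of_le (inv_anti₀ two_pos hm) ▸ hx).1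
  have hflat := integral_cos_mul_eq (f := fun _ => 1) (f' := fun _ => 0) (a := 0) (b := m⁻¹) hω
    (fun x _ => hasDerivAt_const x 1) intervalIntegrable_const
  have htail := integral_cos_mul_eq (f := fun x => x⁻¹) (f' := fun x => -(x ^ 2)⁻¹) hω
    (fun x hx => hasDerivAt_inv (hpos x hx).ne')
    (ContinuousOn.intervalIntegrable (ContinuousOn.neg (ContinuousOn.inv₀ (by fun_prop)
      fun x hx => pow_ne_zero 2 (hpos x hx).ne')))
  simp only [mul_one, mul_zero, intervalIntegral.integral_zero, sin_zero] at hflat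
  simp only [mul_neg, intervalIntegral.integral_neg, hω2, inv_inv] at htail
  rw [integral_mul_truncInv hm (by fun_prop), hflat, htail]
  field_simp
  ring

lemma norm_fourierCoeff_truncInvCircle_le_of_ne_zero (hm : 2 ≤ m) {n : ℤ} (hn : n ≠ 0) :
    ‖fourierCoeff (truncInvCircle m) n‖ ≤ m / (π ^ 2 * n ^ 2) := by
  have hm0 : 0 < m := by linarith
  set ω := 2 * π * n with hω_def
  have hω : ω ≠ 0 := by positivity
  have hω2 : sin (ω * 2⁻¹) = 0 := by
    rw [show ω * 2⁻¹ = n * π by ring]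
    exact sin_int_mul_pi n
  have htail := abs_integral_sin_mul_inv_sq_le (inv_pos.2 hm0) (inv_anti₀ two_pos hm) hω
  rw [fourierCoeff_truncInvCircle, integral_cos_mul_truncInv hm hω hω2, Complex.norm_real,
    Real.norm_eq_abs, abs_mul, abs_mul, abs_two, abs_inv, abs_mul, abs_of_pos hm0]
  calc 2 * ((m * |ω|)⁻¹ * |∫ x in m⁻¹..2⁻¹, sin (ω * x) * (x ^ 2)⁻¹|)
      ≤ 2 * ((m * |ω|)⁻¹ * (2 * ((m⁻¹) ^ 2)⁻¹ / |ω|)) := by gcongr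
    _ = 4 * m / ω ^ 2 := by
      rw [← sq_abs ω]
      field_simp
      ring
    _ = m / (π ^ 2 * n ^ 2) := by
      rw [hω_def]
      field_simp
      ring

lemma summable_fourierCoeff_truncInvCircle (hm : 2 ≤ m) :
    Summable (fourierCoeff (truncInvCircle m)) := by
  refine Summable.of_norm_bounded_eventually
    ((Real.summable_one_div_int_pow.2 one_lt_two).mul_left (m / π ^ 2)) ?_
  filter_upwards [Filter.eventually_cofinite_ne 0] with n hn
  refine (norm_fourierCoeff_truncInvCircle_le_of_ne_zero hm hn).trans_eq ?_
  field_simp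

end coefficients

lemma fourier_coe_eq_e (n : ℤ) (y : ℝ) : fourier n (y : UnitAddCircle) = e (n * y) := by
  rw [fourier_coe_apply, e]
  push_cast
  ring_nf

end FourierMin

open FourierMin in
theorem fourier_expansion_min : ∃ C : ℝ, 0 < C ∧
    ∀ (M : ℕ), 2 ≤ M → ∃ c : ℤ → ℂ,
      (∀ y : ℝ,
        (((if |y - round y| = 0 then (1 : ℝ)
          else min 1 (1 / (M * |y - round y|))) : ℝ) : ℂ) = ∑' n : ℤ, c n * e (n * y)) ∧
      (∀ n : ℤ, ‖c n‖ ≤ C * Real.log M / M) ∧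
      (∀ n : ℤ, n ≠ 0 → ‖c n‖ ≤ C * M / (n : ℝ)^2) := by
  refine ⟨4, by norm_num, fun M hM => ?_⟩
  have hm : (2 : ℝ) ≤ M := by exact_mod_cast hM
  have hm0 : (0 : ℝ) < M := by linarith
  refine ⟨fourierCoeff (truncInvCircle M), fun y => ?_, fun n => ?_, fun n hn => ?_⟩
  · rw [ite_min_eq_truncInv hm0, ← truncInvCircle_coe,
      ← (has_pointwise_sum_fourier_series_of_summable (summable_fourierCoeff_truncInvCircle hm)
        (y : UnitAddCircle)).tsum_eq]
    simp only [smul_eq_mul, fourier_coe_eq_e]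
  · have hlog2 := log_two_gt_d9
    have hlog : log 2 ≤ log M := log_le_log two_pos hm
    calc ‖fourierCoeff (truncInvCircle M) n‖ ≤ 2 * (M : ℝ)⁻¹ * (1 + log (M / 2)) :=
          norm_fourierCoeff_truncInvCircle_le hm n
      _ ≤ 4 * log M / M := by
        rw [log_div hm0.ne' two_ne_zero, div_eq_mul_inv]
        nlinarith [inv_pos.2 hm0]
  · calc ‖fourierCoeff (truncInvCircle M) n‖ ≤ M / (π ^ 2 * n ^ 2) :=
          norm_fourierCoeff_truncInvCircle_le_of_ne_zero hm hn
      _ ≤ 4 * M / (n : ℝ) ^ 2 := by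
        have hπ : 1 ≤ π ^ 2 := by nlinarith [pi_gt_three]
        rw [div_le_div_iff₀ (by positivity) (by positivity)]
        have hn2 : (0 : ℝ) < n ^ 2 := by positivity
        nlinarith [mul_nonneg (mul_pos hm0 hn2).le (by linarith : (0 : ℝ) ≤ 4 * π ^ 2 - 1)]
end
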